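/- Let k be a positive integer and set C(k) = N₄(k) − 12·N₁,₁,₂(k) − 4·N₃(k) + 18·N₂(k) + 24·N₁,₂(k) + 32·N₁,₃(k) + 12·N₂(k/2), where N₂(k/2) is interpreted as 0 when k is odd. If k = m² for some odd positive integer m, then 384·L₄(k) = C(k) − 120; if k = 2m² for some positive integer m, then 384·L₄(k) = C(k) − 72; if k = 3m² for some positive integer m, then 384·L₄(k) = C(k) − 64; if k = 4m² for some positive integer m, then 384·L₄(k) = C(k) − 216. -/

import Mathlib

noncomputable def N4 (k : ℕ) : ℕ := {q : ℤ × ℤ × ℤ × ℤ | q.1 ^ 2 + q.2.1 ^ 2 + q.2.2.1 ^ 2 + q.2.2.2 ^ 2 = (k : ℤ)}.ncard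

noncomputable def L4 (k : ℕ) : ℕ := {q : ℕ × ℕ × ℕ × ℕ | 0 < q.1 ∧ q.1 < q.2.1 ∧ q.2.1 < q.2.2.1 ∧ q.2.2.1 < q.2.2.2 ∧ q.1 ^ 2 + q.2.1 ^ 2 + q.2.2.1 ^ 2 + q.2.2.2 ^ 2 = k}.ncard

noncomputable def N112 (k : ℕ) : ℕ := {t : ℤ × ℤ × ℤ | t.1 ^ 2 + t.2.1 ^ 2 + 2 * t.2.2 ^ 2 = (k : ℤ)}.ncard

noncomputable def N3 (k : ℕ) : ℕ := {t : ℤ × ℤ × ℤ | t.1 ^ 2 + t.2.1 ^ 2 + t.2.2 ^ 2 = (k : ℤ)}.ncard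

noncomputable def N2 (k : ℕ) : ℕ := {p : ℤ × ℤ | p.1 ^ 2 + p.2 ^ 2 = (k : ℤ)}.ncard

noncomputable def N12 (k : ℕ) : ℕ := {p : ℤ × ℤ | p.1 ^ 2 + 2 * p.2 ^ 2 = (k : ℤ)}.ncard

noncomputable def N13 (k : ℕ) : ℕ := {p : ℤ × ℤ | p.1 ^ 2 + 3 * p.2 ^ 2 = (k : ℤ)}.ncard

noncomputable def N2half (k : ℕ) : ℕ := if k % 2 = 0 then N2 (k / 2) else 0

noncomputable def C (k : ℕ) : ℤ := N4 k - 12 * N112 k - 4 * N3 k + 18 * N2 k + 24 * N12 k + 32 * N13 k + 12 * N2half k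

/-
Let `G` be the group of signed permutations of four coordinates (order 2⁴·4! = 384), acting
on the integer points `q` of the sphere `∑ qᵢ² = k`. Each of `N₁,₁,₂(k)`, `N₃(k)`, `N₂(k)`,
`N₁,₂(k)`, `N₁,₃(k)`, `N₂(k/2)` counts the points of the sphere on a coordinate subspace
(`q₂ = q₃`, `q₃ = 0`, ...), so `C(k)` is the sum over the sphere of a combination `w` of
indicators of linear conditions, and `384·C(k) = ∑_q ∑_{g ∈ G} w(g·q)`.

The inner sum only depends on which of the `±qᵢ` coincide, so it suffices to evaluate it on
one representative of each pattern; after sorting there are fifteen. It is `384` when the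
`|qᵢ|` are nonzero and pairwise distinct, and otherwise vanishes unless all nonzero `|qᵢ|`
are equal ("flat" points). Points of the first kind form free `G`-orbits, each containing
exactly one increasing positive quadruple, which gives `384²·L₄(k)`.

Flat points with `j < 4` zero coordinates lie on the sphere only if `k = (4 - j)·a²`, and
then there are `C(4, j)·2^(4-j)` of them. Comparing `p`-adic valuations (and parity, for
`m² = 4a²`), `c·m² = (4 - j)·a²` with `1 ≤ c ≤ 4` forces `c = 4 - j`, or `c = 4` and `j = 3`;
this gives the constants `15·8`, `3·24`, `2·32` and `6·16 + 15·8`.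
-/

open Finset

section GroupAction

variable {G X M : Type*} [Group G] [Fintype G] [MulAction G X] [AddCommMonoid M]

theorem sum_smul_smul (f : X → M) (h : G) (x : X) :
    ∑ g : G, f (g • h • x) = ∑ g : G, f (g • x) := by
  simp_rw [← mul_smul]
  exact Fintype.sum_equiv (Equiv.mulRight h) _ _ fun _ => rfl

theorem sum_sum_smul_eq_card_smul_sum (S : Finset X) (hS : ∀ g : G, ∀ x ∈ S, g • x ∈ S)
    (f : X → M) : ∑ x ∈ S, ∑ g : G, f (g • x) = Fintype.card G • ∑ x ∈ S, f x := by
  rw [sum_comm, ← card_univ, ← sum_const]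
  refine sum_congr rfl fun g _ => ?_
  exact sum_nbij' (g • ·) (g⁻¹ • ·) (hS g) (hS g⁻¹) (fun x _ => inv_smul_smul g x)
    (fun x _ => smul_inv_smul g x) fun _ _ => rfl

theorem card_eq_card_mul_card_of_free [DecidableEq X] (D T : Finset X)
    (hTD : ∀ g : G, ∀ t ∈ T, g • t ∈ D) (hDT : ∀ x ∈ D, ∃ g : G, g • x ∈ T)
    (hT : ∀ g : G, ∀ t ∈ T, g • t ∈ T → g = 1) : #D = Fintype.card G * #T := by
  have hD : D = (univ ×ˢ T).image fun p : G × X => p.1 • p.2 := by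
    ext x
    simp only [mem_image, mem_product, mem_univ, true_and, Prod.exists]
    refine ⟨fun hx => ?_, fun ⟨g, t, ht, hx⟩ => hx ▸ hTD g t ht⟩
    obtain ⟨g, hg⟩ := hDT x hx
    exact ⟨g⁻¹, g • x, hg, inv_smul_smul g x⟩
  rw [hD, card_image_of_injOn, card_product, card_univ]
  rintro ⟨g, t⟩ ht ⟨g', t'⟩ ht' (h : g • t = g' • t')
  replace ht : t ∈ T := (mem_product.1 ht).2
  replace ht' : t' ∈ T := (mem_product.1 ht').2
  have hg : g'⁻¹ * g = 1 := hT _ t ht (by rwa [mul_smul, h, inv_smul_smul])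
  rw [inv_mul_eq_one] at hg
  subst hg
  rw [smul_left_cancel_iff] at h
  rw [h]

end GroupAction

abbrev SignedPerm (ι : Type*) := (ι → ℤˣ) ⋊[mulAutArrow] Equiv.Perm ι

namespace SignedPerm

variable {ι : Type*}

instance [Fintype ι] [DecidableEq ι] : Fintype (SignedPerm ι) :=
  Fintype.ofEquiv _ SemidirectProduct.equivProd.symm

theorem card_eq [Fintype ι] [DecidableEq ι] :
    Fintype.card (SignedPerm ι) = 2 ^ Fintype.card ι * (Fintype.card ι).factorial := by
  rw [Fintype.card_congr SemidirectProduct.equivProd, Fintype.card_prod, Fintype.card_fun,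
    Fintype.card_units_int, Fintype.card_perm]

theorem card_fin_four : Fintype.card (SignedPerm (Fin 4)) = 384 := by
  rw [card_eq]
  rfl

instance : DistribMulAction (SignedPerm ι) (ι → ℤ) where
  smul g q i := g.left i * q (g.right⁻¹ i)
  one_smul q := by
    funext i
    show ((1 : SignedPerm ι).left i : ℤ) * q ((1 : SignedPerm ι).right⁻¹ i) = q i
    simp
  mul_smul g h q := by
    funext i
    show ((g.left i * h.left (g.right⁻¹ i) : ℤˣ) : ℤ) * q ((g.right * h.right)⁻¹ i) =
      g.left i * (h.left (g.right⁻¹ i) * q (h.right⁻¹ (g.right⁻¹ i)))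
    rw [Units.val_mul, mul_assoc, mul_inv_rev, Equiv.Perm.mul_apply]
  smul_zero g := funext fun i => mul_zero (g.left i : ℤ)
  smul_add g q r := funext fun i => mul_add (g.left i : ℤ) _ _

theorem smul_apply (g : SignedPerm ι) (q : ι → ℤ) (i : ι) :
    (g • q) i = g.left i * q (g.right⁻¹ i) := rfl

theorem abs_smul_apply (g : SignedPerm ι) (q : ι → ℤ) (i : ι) :
    |(g • q) i| = |q (g.right⁻¹ i)| := by
  rcases Int.units_eq_one_or (g.left i) with h | h <;> simp [smul_apply, h]

theorem smul_apply_eq_zero_iff (g : SignedPerm ι) (q : ι → ℤ) (i : ι) :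
    (g • q) i = 0 ↔ q (g.right⁻¹ i) = 0 := by
  rw [smul_apply, Units.mul_right_eq_zero]

theorem sum_sq_smul [Fintype ι] (g : SignedPerm ι) (q : ι → ℤ) :
    ∑ i, (g • q) i ^ 2 = ∑ i, q i ^ 2 := by
  simp_rw [← sq_abs ((g • q) _), abs_smul_apply, sq_abs]
  exact Equiv.sum_comp g.right⁻¹ (fun i => q i ^ 2)

theorem exists_smul_monotone_nonneg {n : ℕ} (q : Fin n → ℤ) :
    ∃ g : SignedPerm (Fin n), Monotone (g • q) ∧ ∀ i, 0 ≤ (g • q) i := by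
  set σ := Tuple.sort fun i => |q i|
  let g : SignedPerm (Fin n) := ⟨fun i => if q (σ i) < 0 then -1 else 1, σ⁻¹⟩
  have hg : g • q = fun i => |q (σ i)| := by
    funext i
    rw [smul_apply]
    show ((if q (σ i) < 0 then -1 else 1 : ℤˣ) : ℤ) * q (σ⁻¹⁻¹ i) = |q (σ i)|
    rw [inv_inv]
    split_ifs with h
    · simp [abs_of_neg h]
    · simp [abs_of_nonneg (not_lt.1 h)]
  exact ⟨g, hg ▸ Tuple.monotone_sort fun i => |q i|, fun i => hg ▸ abs_nonneg _⟩

theorem eq_one_of_strictMono [LinearOrder ι] [Finite ι] {g : SignedPerm ι} {t : ι → ℤ}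
    (ht : StrictMono t) (htpos : ∀ i, 0 < t i) (hg : StrictMono (g • t))
    (hgpos : ∀ i, 0 < (g • t) i) : g = 1 := by
  have hgt (i : ι) : (g • t) i = t (g.right⁻¹ i) := by
    rw [← abs_of_pos (hgpos i), abs_smul_apply, abs_of_pos (htpos _)]
  have hright : g.right = 1 := by
    have hinv : StrictMono ⇑(g.right⁻¹) := fun a b hab =>
      ht.lt_iff_lt.1 (by rw [← hgt, ← hgt]; exact hg hab)
    exact inv_eq_one.1 (Equiv.ext fun i => congrFun hinv.eq_id i)
  refine SemidirectProduct.ext (funext fun i => ?_) hright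
  have hi := hgpos i
  rw [smul_apply, hright] at hi
  rcases Int.units_eq_one_or (g.left i) with h | h
  · exact h
  · simp only [h, Units.val_neg, Units.val_one, neg_one_mul, inv_one, Equiv.Perm.one_apply,
      Left.neg_pos_iff] at hi
    exact absurd (htpos i) hi.not_gt

end SignedPerm

noncomputable def latticeSphere (ι : Type*) [Fintype ι] [DecidableEq ι] (k : ℕ) :
    Finset (ι → ℤ) :=
  (Fintype.piFinset fun _ => Icc (-k : ℤ) k).filter fun q => ∑ i, q i ^ 2 = k

section LatticeSphere

variable {ι : Type*} [Fintype ι] [DecidableEq ι] {k : ℕ} {q : ι → ℤ}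

theorem mem_latticeSphere : q ∈ latticeSphere ι k ↔ ∑ i, q i ^ 2 = k := by
  refine mem_filter.trans ⟨And.right, fun h => ⟨Fintype.mem_piFinset.2 fun i => ?_, h⟩⟩
  have hi : q i ^ 2 ≤ k := h ▸ single_le_sum (f := fun j => q j ^ 2)
    (fun j _ => sq_nonneg (q j)) (mem_univ i)
  rw [mem_Icc]
  constructor <;> nlinarith [sq_nonneg (q i + 1), sq_nonneg (q i - 1)]

theorem smul_mem_latticeSphere (g : SignedPerm ι) (hq : q ∈ latticeSphere ι k) :
    g • q ∈ latticeSphere ι k := by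
  rwa [mem_latticeSphere, SignedPerm.sum_sq_smul, ← mem_latticeSphere]

theorem ne_zero_of_mem_latticeSphere (hk : k ≠ 0) (hq : q ∈ latticeSphere ι k) : q ≠ 0 := by
  rintro rfl
  simp only [mem_latticeSphere, Pi.zero_apply, ne_eq, OfNat.ofNat_ne_zero, not_false_eq_true,
    zero_pow, sum_const_zero] at hq
  omega

end LatticeSphere

def SamePattern {ι : Type*} (q r : ι → ℤ) : Prop :=
  ∀ i j, (q i = q j ↔ r i = r j) ∧ (q i = -q j ↔ r i = -r j)

namespace SamePattern

variable {ι : Type*} {q r : ι → ℤ}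

theorem eq_iff (h : SamePattern q r) (i j : ι) : q i = q j ↔ r i = r j := (h i j).1

theorem eq_neg_iff (h : SamePattern q r) (i j : ι) : q i = -q j ↔ r i = -r j := (h i j).2

theorem eq_zero_iff (h : SamePattern q r) (i : ι) : q i = 0 ↔ r i = 0 := by
  rw [← self_eq_neg, h.eq_neg_iff, self_eq_neg]

theorem abs_eq_abs_iff (h : SamePattern q r) (i j : ι) : |q i| = |q j| ↔ |r i| = |r j| := by
  rw [abs_eq_abs, abs_eq_abs, h.eq_iff, h.eq_neg_iff]

theorem smul (h : SamePattern q r) (g : SignedPerm ι) : SamePattern (g • q) (g • r) := by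
  intro i j
  simp only [SignedPerm.smul_apply]
  rcases Int.units_eq_one_or (g.left i) with hi | hi <;>
    rcases Int.units_eq_one_or (g.left j) with hj | hj <;>
    simp [hi, hj, neg_eq_iff_eq_neg, h.eq_iff, h.eq_neg_iff]

end SamePattern

def rankVec {ι : Type*} [Fintype ι] (p : ι → ℤ) (i : ι) : ℕ := #{j | 0 < p j ∧ p j ≤ p i}

section RankVec

variable {ι : Type*} [Fintype ι] {p : ι → ℤ}

theorem rankVec_le_card (i : ι) : rankVec p i ≤ Fintype.card ι := card_filter_le _ _

theorem rankVec_mono {i j : ι} (h : p i ≤ p j) : rankVec p i ≤ rankVec p j :=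
  card_le_card <| monotone_filter_right _ fun _ _ hl => ⟨hl.1, hl.2.trans h⟩

theorem rankVec_strictMono {i j : ι} (hi : 0 ≤ p i) (h : p i < p j) :
    rankVec p i < rankVec p j := by
  refine card_lt_card <| (ssubset_iff_of_subset ?_).2 ⟨j, ?_, ?_⟩
  · exact monotone_filter_right _ fun _ _ hl => ⟨hl.1, hl.2.trans h.le⟩
  · simp only [mem_filter, mem_univ, true_and]
    exact ⟨hi.trans_lt h, le_rfl⟩
  · simp only [mem_filter, mem_univ, true_and, not_and, not_le]
    exact fun _ => h

theorem rankVec_eq_zero_iff {i : ι} (hi : 0 ≤ p i) : rankVec p i = 0 ↔ p i = 0 := by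
  rw [rankVec, card_eq_zero, filter_eq_empty_iff]
  constructor
  · intro h
    by_contra hne
    exact h (mem_univ i) ⟨lt_of_le_of_ne hi (Ne.symm hne), le_rfl⟩
  · intro h j _ hj
    omega

variable (hp : ∀ i, 0 ≤ p i)
include hp

theorem rankVec_le_rankVec_iff {i j : ι} : rankVec p i ≤ rankVec p j ↔ p i ≤ p j :=
  ⟨fun h => not_lt.1 fun hlt => (rankVec_strictMono (hp j) hlt).not_ge h, rankVec_mono⟩

theorem samePattern_rankVec : SamePattern p fun i => (rankVec p i : ℤ) := by
  have eq_neg {a b : ℤ} (ha : 0 ≤ a) (hb : 0 ≤ b) : a = -b ↔ a = 0 ∧ b = 0 := by omega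
  intro i j
  rw [eq_neg (hp i) (hp j), eq_neg (Nat.cast_nonneg _) (Nat.cast_nonneg _), Nat.cast_eq_zero,
    Nat.cast_eq_zero, rankVec_eq_zero_iff (hp i), rankVec_eq_zero_iff (hp j), Nat.cast_inj,
    le_antisymm_iff, le_antisymm_iff, rankVec_le_rankVec_iff hp, rankVec_le_rankVec_iff hp]
  exact ⟨Iff.rfl, Iff.rfl⟩

theorem rankVec_rankVec : rankVec (fun i => (rankVec p i : ℤ)) = rankVec p := by
  funext i
  refine congrArg card (filter_congr fun j _ => ?_)
  rw [Nat.cast_le, rankVec_le_rankVec_iff hp, Nat.cast_pos, Nat.pos_iff_ne_zero,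
    Ne, rankVec_eq_zero_iff (hp j), ← Ne, (hp j).lt_iff_ne', ne_comm]

end RankVec

def IsGeneric {ι : Type*} (q : ι → ℤ) : Prop :=
  (∀ i, q i ≠ 0) ∧ Function.Injective fun i => |q i|

def IsFlat {ι : Type*} [Fintype ι] (j : ℕ) (q : ι → ℤ) : Prop :=
  #{i | q i = 0} = j ∧ ∀ i i', q i ≠ 0 → q i' ≠ 0 → |q i| = |q i'|

section Patterns

variable {ι : Type*} {q r : ι → ℤ}

instance [Fintype ι] [DecidableEq ι] : DecidablePred (IsGeneric (ι := ι)) :=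
  fun _ => by unfold IsGeneric; infer_instance

instance [Fintype ι] (j : ℕ) : DecidablePred (IsFlat (ι := ι) j) :=
  fun _ => by unfold IsFlat; infer_instance

theorem SamePattern.isGeneric_iff (h : SamePattern q r) : IsGeneric q ↔ IsGeneric r := by
  simp only [IsGeneric, Function.Injective, Ne, h.eq_zero_iff, h.abs_eq_abs_iff]

theorem SamePattern.isFlat_iff [Fintype ι] (h : SamePattern q r) (j : ℕ) :
    IsFlat j q ↔ IsFlat j r := by
  simp only [IsFlat, Ne, h.eq_zero_iff, h.abs_eq_abs_iff]

theorem isGeneric_smul_iff (g : SignedPerm ι) : IsGeneric (g • q) ↔ IsGeneric q := by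
  have habs : (fun i => |(g • q) i|) = (fun i => |q i|) ∘ g.right.symm :=
    funext (SignedPerm.abs_smul_apply g q)
  simp only [IsGeneric, Ne, SignedPerm.smul_apply_eq_zero_iff, habs, Equiv.injective_comp]
  refine and_congr_left' ⟨fun h i => ?_, fun h i => h _⟩
  simpa using h (g.right i)

theorem isFlat_smul_iff [Fintype ι] (g : SignedPerm ι) (j : ℕ) :
    IsFlat j (g • q) ↔ IsFlat j q := by
  simp only [IsFlat, Ne, SignedPerm.smul_apply_eq_zero_iff, SignedPerm.abs_smul_apply]
  rw [card_equiv (g.right⁻¹) (t := {i | q i = 0}) (by simp)]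
  refine and_congr_right' ⟨fun h i i' => ?_, fun h i i' => h _ _⟩
  simpa using h (g.right i) (g.right i')

end Patterns

def linearWeight (x : Fin 4 → ℤ) : ℤ :=
  1 - 12 * (if x 2 = x 3 then 1 else 0) - 4 * (if x 3 = 0 then 1 else 0)
    + 18 * (if x 2 = 0 ∧ x 3 = 0 then 1 else 0) + 24 * (if x 1 = x 2 ∧ x 3 = 0 then 1 else 0)
    + 32 * (if x 1 = x 2 ∧ x 2 = x 3 then 1 else 0)
    + 12 * (if x 0 = x 1 ∧ x 2 = x 3 then 1 else 0)

def orbitWeight (q : Fin 4 → ℤ) : ℤ := ∑ g : SignedPerm (Fin 4), linearWeight (g • q)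

def patternWeight (q : Fin 4 → ℤ) : ℤ :=
  (if IsGeneric q then 1 else 0) + 6 * (if IsFlat 0 q then 1 else 0)
    + 2 * (if IsFlat 1 q then 1 else 0) + 3 * (if IsFlat 2 q then 1 else 0)
    + 15 * (if IsFlat 3 q then 1 else 0)

theorem linearWeight_congr {x y : Fin 4 → ℤ} (h : SamePattern x y) :
    linearWeight x = linearWeight y := by
  simp only [linearWeight, h.eq_iff, h.eq_zero_iff]

theorem orbitWeight_congr {q r : Fin 4 → ℤ} (h : SamePattern q r) :
    orbitWeight q = orbitWeight r :=
  sum_congr rfl fun g _ => linearWeight_congr (h.smul g)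

theorem orbitWeight_smul (g : SignedPerm (Fin 4)) (q : Fin 4 → ℤ) :
    orbitWeight (g • q) = orbitWeight q :=
  sum_smul_smul _ g q

theorem patternWeight_congr {q r : Fin 4 → ℤ} (h : SamePattern q r) :
    patternWeight q = patternWeight r := by
  simp only [patternWeight, h.isGeneric_iff, h.isFlat_iff]

theorem patternWeight_smul (g : SignedPerm (Fin 4)) (q : Fin 4 → ℤ) :
    patternWeight (g • q) = patternWeight q := by
  simp only [patternWeight, isGeneric_smul_iff, isFlat_smul_iff]

-- The hypotheses single out the fifteen vectors `rankVec p` of nonzero monotone `p ≥ 0`.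
theorem orbitWeight_eq_of_rankVec_eq : ∀ a b c d : Fin 5, a ≤ b → b ≤ c → c ≤ d → d ≠ 0 →
    rankVec ![(a : ℤ), b, c, d] = ![(a : ℕ), b, c, d] →
    orbitWeight ![(a : ℤ), b, c, d] = 384 * patternWeight ![(a : ℤ), b, c, d] := by
  decide +kernel

theorem orbitWeight_eq {q : Fin 4 → ℤ} (hq : q ≠ 0) :
    orbitWeight q = 384 * patternWeight q := by
  obtain ⟨g, hmono, hnonneg⟩ := SignedPerm.exists_smul_monotone_nonneg q
  set p := g • q
  have hp3 : 0 < p 3 := by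
    obtain ⟨i, hi⟩ := Function.ne_iff.1 ((smul_ne_zero_iff_ne g).2 hq)
    exact (lt_of_le_of_ne (hnonneg i) (Ne.symm hi)).trans_le (hmono (Fin.le_last i))
  have hr := samePattern_rankVec hnonneg
  rw [← orbitWeight_smul g, ← patternWeight_smul g, orbitWeight_congr hr, patternWeight_congr hr]
  let rk (i : Fin 4) : Fin 5 := ⟨rankVec p i, Nat.lt_succ_of_le (rankVec_le_card i)⟩
  have hrk : (fun i => (rankVec p i : ℤ)) = ![(rk 0 : ℤ), rk 1, rk 2, rk 3] := by
    funext i; fin_cases i <;> rfl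
  rw [hrk]
  refine orbitWeight_eq_of_rankVec_eq _ _ _ _ (Fin.mk_le_mk.2 (rankVec_mono (hmono (by decide))))
    (Fin.mk_le_mk.2 (rankVec_mono (hmono (by decide))))
    (Fin.mk_le_mk.2 (rankVec_mono (hmono (by decide))))
    (fun h => (rankVec_eq_zero_iff (hnonneg 3)).not.2 hp3.ne' (congrArg Fin.val h)) ?_
  rw [← hrk, rankVec_rankVec hnonneg]
  funext i; fin_cases i <;> rfl

theorem Set.ncard_eq_card_of_injective {α β : Type*} {P : α → Prop} (f : α → β)
    (hf : f.Injective) (S : Finset β) (hS : ∀ b, b ∈ S ↔ ∃ a, P a ∧ f a = b) :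
    {a | P a}.ncard = #S := by
  rw [← Set.ncard_image_of_injective _ hf, ← Set.ncard_coe_finset]
  congr 1
  ext b
  simp [hS]

section Representations

variable (k : ℕ)

theorem N4_eq_card : N4 k = #(latticeSphere (Fin 4) k) := by
  refine Set.ncard_eq_card_of_injective (fun t : ℤ × ℤ × ℤ × ℤ => ![t.1, t.2.1, t.2.2.1, t.2.2.2])
    (fun t t' h => Prod.ext (congrFun h 0) (Prod.ext (congrFun h 1)
      (Prod.ext (congrFun h 2) (congrFun h 3)))) _ fun q => ?_
  rw [mem_latticeSphere, Fin.sum_univ_four]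
  refine ⟨fun h => ⟨(q 0, q 1, q 2, q 3), h, ?_⟩, fun ⟨t, ht, hq⟩ => hq ▸ ht⟩
  funext i; fin_cases i <;> rfl

theorem N112_eq_card : N112 k = #{q ∈ latticeSphere (Fin 4) k | q 2 = q 3} := by
  refine Set.ncard_eq_card_of_injective (fun t : ℤ × ℤ × ℤ => ![t.1, t.2.1, t.2.2, t.2.2])
    (fun t t' h => Prod.ext (congrFun h 0) (Prod.ext (congrFun h 1) (congrFun h 2))) _ fun q => ?_
  rw [mem_filter, mem_latticeSphere, Fin.sum_univ_four]
  refine ⟨fun ⟨h, h23⟩ => ⟨(q 0, q 1, q 2), ?_, ?_⟩, fun ⟨t, ht, hq⟩ => hq ▸ ⟨?_, rfl⟩⟩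
  · rw [← h, h23]; ring
  · funext i; fin_cases i <;> simp [h23]
  · simp only [Matrix.cons_val]; rw [← ht]; ring

theorem N3_eq_card : N3 k = #{q ∈ latticeSphere (Fin 4) k | q 3 = 0} := by
  refine Set.ncard_eq_card_of_injective (fun t : ℤ × ℤ × ℤ => ![t.1, t.2.1, t.2.2, 0])
    (fun t t' h => Prod.ext (congrFun h 0) (Prod.ext (congrFun h 1) (congrFun h 2))) _ fun q => ?_
  rw [mem_filter, mem_latticeSphere, Fin.sum_univ_four]
  refine ⟨fun ⟨h, h3⟩ => ⟨(q 0, q 1, q 2), ?_, ?_⟩, fun ⟨t, ht, hq⟩ => hq ▸ ⟨?_, rfl⟩⟩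
  · rw [← h, h3]; ring
  · funext i; fin_cases i <;> simp [h3]
  · simp only [Matrix.cons_val]; rw [← ht]; ring

theorem N2_eq_card : N2 k = #{q ∈ latticeSphere (Fin 4) k | q 2 = 0 ∧ q 3 = 0} := by
  refine Set.ncard_eq_card_of_injective (fun t : ℤ × ℤ => ![t.1, t.2, 0, 0])
    (fun t t' h => Prod.ext (congrFun h 0) (congrFun h 1)) _ fun q => ?_
  rw [mem_filter, mem_latticeSphere, Fin.sum_univ_four]
  refine ⟨fun ⟨h, h2, h3⟩ => ⟨(q 0, q 1), ?_, ?_⟩, fun ⟨t, ht, hq⟩ => hq ▸ ⟨?_, rfl, rfl⟩⟩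
  · rw [← h, h2, h3]; ring
  · funext i; fin_cases i <;> simp [h2, h3]
  · simp only [Matrix.cons_val]; rw [← ht]; ring

theorem N12_eq_card : N12 k = #{q ∈ latticeSphere (Fin 4) k | q 1 = q 2 ∧ q 3 = 0} := by
  refine Set.ncard_eq_card_of_injective (fun t : ℤ × ℤ => ![t.1, t.2, t.2, 0])
    (fun t t' h => Prod.ext (congrFun h 0) (congrFun h 1)) _ fun q => ?_
  rw [mem_filter, mem_latticeSphere, Fin.sum_univ_four]
  refine ⟨fun ⟨h, h12, h3⟩ => ⟨(q 0, q 1), ?_, ?_⟩, fun ⟨t, ht, hq⟩ => hq ▸ ⟨?_, rfl, rfl⟩⟩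
  · rw [← h, h12, h3]; ring
  · funext i; fin_cases i <;> simp [h12, h3]
  · simp only [Matrix.cons_val]; rw [← ht]; ring

theorem N13_eq_card : N13 k = #{q ∈ latticeSphere (Fin 4) k | q 1 = q 2 ∧ q 2 = q 3} := by
  refine Set.ncard_eq_card_of_injective (fun t : ℤ × ℤ => ![t.1, t.2, t.2, t.2])
    (fun t t' h => Prod.ext (congrFun h 0) (congrFun h 1)) _ fun q => ?_
  rw [mem_filter, mem_latticeSphere, Fin.sum_univ_four]
  refine ⟨fun ⟨h, h12, h23⟩ => ⟨(q 0, q 1), ?_, ?_⟩, fun ⟨t, ht, hq⟩ => hq ▸ ⟨?_, rfl, rfl⟩⟩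
  · rw [← h, ← h23, ← h12]; ring
  · funext i; fin_cases i <;> simp [h12, h23]
  · simp only [Matrix.cons_val]; rw [← ht]; ring

theorem N2half_eq_card :
    N2half k = #{q ∈ latticeSphere (Fin 4) k | q 0 = q 1 ∧ q 2 = q 3} := by
  rw [N2half]
  split_ifs with hk
  · refine Set.ncard_eq_card_of_injective (fun t : ℤ × ℤ => ![t.1, t.1, t.2, t.2])
      (fun t t' h => Prod.ext (congrFun h 0) (congrFun h 2)) _ fun q => ?_
    rw [mem_filter, mem_latticeSphere, Fin.sum_univ_four]
    refine ⟨fun ⟨h, h01, h23⟩ => ⟨(q 0, q 2), ?_, ?_⟩, fun ⟨t, ht, hq⟩ => hq ▸ ⟨?_, rfl, rfl⟩⟩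
    · rw [← h01, ← h23] at h; dsimp only; omega
    · funext i; fin_cases i <;> simp [h01, h23]
    · simp only [Matrix.cons_val]; omega
  · refine (card_eq_zero.2 (filter_eq_empty_iff.2 fun q hq ⟨h01, h23⟩ => ?_)).symm
    rw [mem_latticeSphere, Fin.sum_univ_four, h01, h23] at hq
    omega

theorem L4_eq_card : L4 k = #{q ∈ latticeSphere (Fin 4) k | (∀ i, 0 < q i) ∧ StrictMono q} := by
  refine Set.ncard_eq_card_of_injective
    (fun t : ℕ × ℕ × ℕ × ℕ => ![(t.1 : ℤ), t.2.1, t.2.2.1, t.2.2.2])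
    (fun t t' h => Prod.ext (Nat.cast_injective (congrFun h 0)) (Prod.ext
      (Nat.cast_injective (congrFun h 1)) (Prod.ext (Nat.cast_injective (congrFun h 2))
      (Nat.cast_injective (congrFun h 3))))) _ fun q => ?_
  rw [mem_filter, mem_latticeSphere, Fin.sum_univ_four, Fin.strictMono_iff_lt_succ]
  constructor
  · rintro ⟨h, hpos, hmono⟩
    have hq (i : Fin 4) : ((q i).toNat : ℤ) = q i := Int.toNat_of_nonneg (hpos i).le
    have h0 : 0 < q 0 := hpos 0
    have h01 : q 0 < q 1 := hmono 0
    have h12 : q 1 < q 2 := hmono 1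
    have h23 : q 2 < q 3 := hmono 2
    refine ⟨((q 0).toNat, (q 1).toNat, (q 2).toNat, (q 3).toNat), ⟨?_, ?_, ?_, ?_, ?_⟩, ?_⟩
    all_goals dsimp only
    any_goals omega
    · rw [← hq 0, ← hq 1, ← hq 2, ← hq 3] at h
      exact_mod_cast h
    · funext i; fin_cases i <;> simp [hq]
  · rintro ⟨t, ⟨h0, h01, h12, h23, h⟩, rfl⟩
    refine ⟨by simp only [Matrix.cons_val]; exact_mod_cast h, fun i => ?_, fun i => ?_⟩ <;>
      fin_cases i <;>
      simp only [Fin.isValue, Fin.zero_eta, Fin.mk_one, Fin.reduceFinMk, Fin.reduceCastSucc,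
        Fin.reduceSucc, Matrix.cons_val, Nat.cast_pos, Nat.cast_lt] <;>
      omega

end Representations

theorem sum_linearWeight (k : ℕ) : ∑ q ∈ latticeSphere (Fin 4) k, linearWeight q = C k := by
  simp only [linearWeight, sum_add_distrib, sum_sub_distrib, ← mul_sum, sum_boole, sum_const,
    nsmul_eq_mul, mul_one]
  rw [C, N4_eq_card, N112_eq_card, N3_eq_card, N2_eq_card, N12_eq_card, N13_eq_card,
    N2half_eq_card]

theorem card_isGeneric {n : ℕ} (k : ℕ) :
    #{q ∈ latticeSphere (Fin n) k | IsGeneric q} = Fintype.card (SignedPerm (Fin n)) *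
      #{q ∈ latticeSphere (Fin n) k | (∀ i, 0 < q i) ∧ StrictMono q} := by
  refine card_eq_card_mul_card_of_free _ _ (fun g t ht => ?_) (fun x hx => ?_)
    fun g t ht hgt => ?_
  · obtain ⟨ht, htpos, hmono⟩ := mem_filter.1 ht
    refine mem_filter.2 ⟨smul_mem_latticeSphere g ht,
      (isGeneric_smul_iff g).2 ⟨fun i => (htpos i).ne', ?_⟩⟩
    simpa only [abs_of_pos (htpos _)] using hmono.injective
  · obtain ⟨hx, hgen⟩ := mem_filter.1 hx
    obtain ⟨g, hmono, hnonneg⟩ := SignedPerm.exists_smul_monotone_nonneg x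
    obtain ⟨hne, hinj⟩ := (isGeneric_smul_iff g).2 hgen
    refine ⟨g, mem_filter.2 ⟨smul_mem_latticeSphere g hx,
      fun i => (hnonneg i).lt_of_ne' (hne i), ?_⟩⟩
    exact hmono.strictMono_of_injective (by simpa only [abs_of_nonneg (hnonneg _)] using hinj)
  · obtain ⟨-, htpos, hmono⟩ := mem_filter.1 ht
    obtain ⟨-, hgpos, hgmono⟩ := mem_filter.1 hgt
    exact SignedPerm.eq_one_of_strictMono hmono htpos hgmono hgpos

section FlatPoints

variable {ι : Type*} [Fintype ι]

theorem sum_sq_sign_mul (s : ι → SignType) (a : ℤ) :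
    ∑ i, ((s i : ℤ) * a) ^ 2 = ((Fintype.card ι - #{i | s i = 0} : ℕ) : ℤ) * a ^ 2 := by
  have hs (t : SignType) : ((t : ℤ) * a) ^ 2 = if t = 0 then 0 else a ^ 2 := by
    rcases t with _ | _ | _ <;> simp
  have hcard := card_filter_add_card_filter_not (s := univ) fun i => s i = 0
  rw [card_univ] at hcard
  rw [sum_congr rfl fun i _ => hs (s i), sum_ite, sum_const_zero, zero_add, sum_const,
    nsmul_eq_mul]
  congr 2
  omega

theorem isFlat_sign_mul (s : ι → SignType) {a : ℤ} (ha : a ≠ 0) :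
    IsFlat #{i | s i = 0} fun i => (s i : ℤ) * a := by
  have hzero (t : SignType) : (t : ℤ) * a = 0 ↔ t = 0 := by
    rcases t with _ | _ | _ <;> simp [ha]
  have habs (t : SignType) (ht : t ≠ 0) : |(t : ℤ) * a| = |a| := by
    rcases t with _ | _ | _ <;> simp_all
  refine ⟨congrArg card (filter_congr fun i _ => hzero (s i)), fun i i' hi hi' => ?_⟩
  rw [Ne, hzero] at hi hi'
  rw [habs _ hi, habs _ hi']

theorem IsFlat.exists_eq_sign_mul {j : ℕ} {q : ι → ℤ} (hq : IsFlat j q)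
    (hj : j < Fintype.card ι) :
    ∃ a : ℕ, 0 < a ∧ q = (fun i => (SignType.sign (q i) : ℤ) * a) ∧
      ∑ i, q i ^ 2 = ((Fintype.card ι - j) * a ^ 2 : ℕ) := by
  obtain ⟨i₀, hi₀⟩ : ∃ i₀, q i₀ ≠ 0 := by
    by_contra! h
    have : #{i | q i = 0} = Fintype.card ι := by
      rw [filter_true_of_mem fun i _ => h i, card_univ]
    exact hj.ne (hq.1 ▸ this)
  have hq' : q = fun i => (SignType.sign (q i) : ℤ) * (q i₀).natAbs := by
    funext i
    rw [Int.natCast_natAbs]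
    by_cases hi : q i = 0
    · simp [hi]
    · rw [← hq.2 i i₀ hi hi₀, sign_mul_abs]
  refine ⟨(q i₀).natAbs, Int.natAbs_pos.2 hi₀, hq', ?_⟩
  have hzeros : #{i | SignType.sign (q i) = 0} = j := by
    simpa only [sign_eq_zero_iff] using hq.1
  conv_lhs => rw [hq']
  rw [sum_sq_sign_mul, hzeros]
  push_cast
  rfl

variable [DecidableEq ι]

theorem card_isFlat_eq_zero {j k : ℕ} (hj : j < Fintype.card ι)
    (hk : ∀ a : ℕ, 0 < a → k ≠ (Fintype.card ι - j) * a ^ 2) :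
    #{q ∈ latticeSphere ι k | IsFlat j q} = 0 := by
  refine card_eq_zero.2 (filter_eq_empty_iff.2 fun q hq hflat => ?_)
  obtain ⟨a, ha, -, hsum⟩ := hflat.exists_eq_sign_mul hj
  rw [mem_latticeSphere, hsum] at hq
  exact hk a ha (by exact_mod_cast hq.symm)

theorem card_isFlat {j m : ℕ} (hj : j < Fintype.card ι) (hm : 0 < m) :
    #{q ∈ latticeSphere ι ((Fintype.card ι - j) * m ^ 2) | IsFlat j q} =
      #{s : ι → SignType | #{i | s i = 0} = j} := by
  have hm' : (m : ℤ) ≠ 0 := by exact_mod_cast hm.ne'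
  refine (card_nbij (fun s i => (s i : ℤ) * m) (fun s hs => ?_) (fun s _ s' _ h => ?_)
    fun q hq => ?_).symm
  · replace hs : #{i | s i = 0} = j := (mem_filter.1 hs).2
    refine mem_filter.2 ⟨?_, hs ▸ isFlat_sign_mul s hm'⟩
    rw [mem_latticeSphere, sum_sq_sign_mul, hs]
    push_cast
    rfl
  · have hcast (t t' : SignType) (h : (t : ℤ) = t') : t = t' := by
      rcases t with _ | _ | _ <;> rcases t' with _ | _ | _ <;> simp_all
    exact funext fun i => hcast _ _ (mul_right_cancel₀ hm' (congrFun h i))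
  · obtain ⟨hq, hflat⟩ := mem_filter.1 hq
    obtain ⟨a, ha, hqa, hsum⟩ := hflat.exists_eq_sign_mul hj
    rw [mem_latticeSphere, hsum, Nat.cast_inj] at hq
    have ham : a = m :=
      Nat.pow_left_injective two_ne_zero (Nat.eq_of_mul_eq_mul_left (Nat.sub_pos_of_lt hj) hq)
    refine ⟨fun i => SignType.sign (q i), mem_filter.2 ⟨mem_univ _, ?_⟩, ?_⟩
    · simpa only [sign_eq_zero_iff] using hflat.1
    · rw [← ham]
      exact hqa.symm

end FlatPoints

theorem card_signType_filter_zeros :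
    ∀ j < 4, #{s : Fin 4 → SignType | #{i | s i = 0} = j} = Nat.choose 4 j * 2 ^ (4 - j) := by
  decide +kernel

theorem card_isFlat_fin_four {j m : ℕ} (hj : j < 4) (hm : 0 < m) :
    #{q ∈ latticeSphere (Fin 4) ((4 - j) * m ^ 2) | IsFlat j q} =
      Nat.choose 4 j * 2 ^ (4 - j) := by
  rw [← card_signType_filter_zeros j hj]
  simpa using card_isFlat (ι := Fin 4) (by simpa using hj) hm

theorem card_isFlat_fin_four_eq_zero {j k : ℕ} (hj : j < 4)
    (hk : ∀ a : ℕ, 0 < a → k ≠ (4 - j) * a ^ 2) :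
    #{q ∈ latticeSphere (Fin 4) k | IsFlat j q} = 0 :=
  card_isFlat_eq_zero (by simpa using hj) (by simpa using hk)

noncomputable def flatCorrection (k : ℕ) : ℤ :=
  6 * #{q ∈ latticeSphere (Fin 4) k | IsFlat 0 q} + 2 * #{q ∈ latticeSphere (Fin 4) k | IsFlat 1 q}
    + 3 * #{q ∈ latticeSphere (Fin 4) k | IsFlat 2 q}
    + 15 * #{q ∈ latticeSphere (Fin 4) k | IsFlat 3 q}

theorem C_eq_of_ne_zero {k : ℕ} (hk : k ≠ 0) : C k = 384 * L4 k + flatCorrection k := by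
  have hcount : 384 * C k = ∑ q ∈ latticeSphere (Fin 4) k, orbitWeight q := by
    rw [← sum_linearWeight]
    unfold orbitWeight
    rw [sum_sum_smul_eq_card_smul_sum _ (fun g _ => smul_mem_latticeSphere g),
      SignedPerm.card_fin_four, nsmul_eq_mul, Nat.cast_ofNat]
  have hlocal : ∑ q ∈ latticeSphere (Fin 4) k, orbitWeight q =
      384 * ∑ q ∈ latticeSphere (Fin 4) k, patternWeight q := by
    rw [mul_sum]
    exact sum_congr rfl fun q hq => orbitWeight_eq (ne_zero_of_mem_latticeSphere hk hq)
  have hpattern : ∑ q ∈ latticeSphere (Fin 4) k, patternWeight q =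
      #{q ∈ latticeSphere (Fin 4) k | IsGeneric q} + flatCorrection k := by
    simp only [patternWeight, sum_add_distrib, ← mul_sum, sum_boole, flatCorrection]
    ring
  rw [card_isGeneric, SignedPerm.card_fin_four, ← L4_eq_card] at hpattern
  push_cast at hpattern
  linarith

theorem Nat.Prime.mul_sq_ne_mul_sq {p c a b : ℕ} (hp : p.Prime) (hc : ¬p ∣ c) (hb : b ≠ 0) :
    p * a ^ 2 ≠ c * b ^ 2 := by
  intro h
  have hc0 : c ≠ 0 := by rintro rfl; exact hc (dvd_zero p)
  have ha : a ≠ 0 := by rintro rfl; simp [hc0, hb] at h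
  have := Fact.mk hp
  have hval := congrArg (padicValNat p) h
  rw [padicValNat.mul hp.ne_zero (pow_ne_zero 2 ha), padicValNat.mul hc0 (pow_ne_zero 2 hb),
    padicValNat.pow, padicValNat.pow, padicValNat.self hp.one_lt,
    padicValNat.eq_zero_of_not_dvd hc] at hval
  omega

theorem flatCorrection_sq {m : ℕ} (hm : Odd m) : flatCorrection (m ^ 2) = 120 := by
  have hm0 : m ≠ 0 := by rintro rfl; exact Nat.not_odd_zero hm
  rw [flatCorrection,
    card_isFlat_fin_four_eq_zero (j := 0) (by norm_num) fun a _ h => ?_,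
    card_isFlat_fin_four_eq_zero (j := 1) (by norm_num) fun a _ h =>
      Nat.prime_three.mul_sq_ne_mul_sq (c := 1) (a := a) (by norm_num) hm0 (by omega),
    card_isFlat_fin_four_eq_zero (j := 2) (by norm_num) fun a _ h =>
      Nat.prime_two.mul_sq_ne_mul_sq (c := 1) (a := a) (by norm_num) hm0 (by omega),
    show m ^ 2 = (4 - 3) * m ^ 2 by ring,
    card_isFlat_fin_four (by norm_num) (Nat.pos_of_ne_zero hm0)]
  · rfl
  · have : m = 2 * a :=
      Nat.pow_left_injective two_ne_zero (show m ^ 2 = (2 * a) ^ 2 by rw [mul_pow]; omega)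
    exact Nat.not_even_iff_odd.2 hm ⟨a, by omega⟩

theorem flatCorrection_two_mul_sq {m : ℕ} (hm : 0 < m) : flatCorrection (2 * m ^ 2) = 72 := by
  rw [flatCorrection,
    card_isFlat_fin_four_eq_zero (j := 0) (by norm_num) fun a _ h =>
      Nat.prime_two.mul_sq_ne_mul_sq (c := 1) (a := a) (by norm_num) hm.ne' (by omega),
    card_isFlat_fin_four_eq_zero (j := 1) (by norm_num) fun a _ h =>
      Nat.prime_three.mul_sq_ne_mul_sq (c := 2) (a := a) (by norm_num) hm.ne' (by omega),
    card_isFlat_fin_four_eq_zero (j := 3) (by norm_num) fun a ha h =>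
      Nat.prime_two.mul_sq_ne_mul_sq (c := 1) (a := m) (by norm_num) ha.ne' (by omega),
    show 2 * m ^ 2 = (4 - 2) * m ^ 2 by rfl, card_isFlat_fin_four (by norm_num) hm]
  rfl

theorem flatCorrection_three_mul_sq {m : ℕ} (hm : 0 < m) : flatCorrection (3 * m ^ 2) = 64 := by
  rw [flatCorrection,
    card_isFlat_fin_four_eq_zero (j := 0) (by norm_num) fun a ha h =>
      Nat.prime_three.mul_sq_ne_mul_sq (c := 4) (a := m) (by norm_num) ha.ne' (by omega),
    card_isFlat_fin_four_eq_zero (j := 2) (by norm_num) fun a ha h =>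
      Nat.prime_three.mul_sq_ne_mul_sq (c := 2) (a := m) (by norm_num) ha.ne' (by omega),
    card_isFlat_fin_four_eq_zero (j := 3) (by norm_num) fun a ha h =>
      Nat.prime_three.mul_sq_ne_mul_sq (c := 1) (a := m) (by norm_num) ha.ne' (by omega),
    show 3 * m ^ 2 = (4 - 1) * m ^ 2 by rfl, card_isFlat_fin_four (by norm_num) hm]
  rfl

theorem flatCorrection_four_mul_sq {m : ℕ} (hm : 0 < m) : flatCorrection (4 * m ^ 2) = 216 := by
  rw [flatCorrection,
    card_isFlat_fin_four_eq_zero (j := 1) (by norm_num) fun a _ h =>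
      Nat.prime_three.mul_sq_ne_mul_sq (c := 4) (a := a) (by norm_num) hm.ne' (by omega),
    card_isFlat_fin_four_eq_zero (j := 2) (by norm_num) fun a ha h =>
      Nat.prime_two.mul_sq_ne_mul_sq (c := 1) (a := m) (by norm_num) ha.ne' (by omega),
    show 4 * m ^ 2 = (4 - 0) * m ^ 2 by rfl, card_isFlat_fin_four (by norm_num) hm,
    show (4 - 0) * m ^ 2 = (4 - 3) * (2 * m) ^ 2 by ring,
    card_isFlat_fin_four (by norm_num) (by omega)]
  rfl

theorem stmt13_general (k : ℕ) :
    ((∃ m : ℕ, 0 < m ∧ Odd m ∧ k = m ^ 2) → (384 * L4 k : ℤ) = C k - 120) ∧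
    ((∃ m : ℕ, 0 < m ∧ k = 2 * m ^ 2) → (384 * L4 k : ℤ) = C k - 72) ∧
    ((∃ m : ℕ, 0 < m ∧ k = 3 * m ^ 2) → (384 * L4 k : ℤ) = C k - 64) ∧
    ((∃ m : ℕ, 0 < m ∧ k = 4 * m ^ 2) → (384 * L4 k : ℤ) = C k - 216) := by
  refine ⟨?_, ?_, ?_, ?_⟩
  · rintro ⟨m, hm, hodd, rfl⟩
    rw [C_eq_of_ne_zero (by positivity), flatCorrection_sq hodd]
    ring
  · rintro ⟨m, hm, rfl⟩
    rw [C_eq_of_ne_zero (by positivity), flatCorrection_two_mul_sq hm]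
    ring
  · rintro ⟨m, hm, rfl⟩
    rw [C_eq_of_ne_zero (by positivity), flatCorrection_three_mul_sq hm]
    ring
  · rintro ⟨m, hm, rfl⟩
    rw [C_eq_of_ne_zero (by positivity), flatCorrection_four_mul_sq hm]
    ring

theorem stmt13 (k : ℕ) (hk : 0 < k) :
    ((∃ m : ℕ, 0 < m ∧ Odd m ∧ k = m ^ 2) → (384 * L4 k : ℤ) = C k - 120) ∧
    ((∃ m : ℕ, 0 < m ∧ k = 2 * m ^ 2) → (384 * L4 k : ℤ) = C k - 72) ∧
    ((∃ m : ℕ, 0 < m ∧ k = 3 * m ^ 2) → (384 * L4 k : ℤ) = C k - 64) ∧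
    ((∃ m : ℕ, 0 < m ∧ k = 4 * m ^ 2) → (384 * L4 k : ℤ) = C k - 216) :=
  stmt13_general k
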